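/- Let d ≥ 1 be an integer, let A be a real symmetric positive definite d×d matrix, let n ≥ 1, and for i = 1,…,n let μ_i be a (positive) measure on [0,∞) such that h_i(x) = ∫₀^∞ e^{−s|x|²} dμ_i(s) is finite for all x ∈ ℝ^d. Define F(x) = ∫_{ℝ^d} e^{−⟨y, A y⟩} ∏_{i=1}^n h_i(x + y) dy. Then F(x) ≤ F(0) for all x ∈ ℝ^d; that is, F is maximal at x = 0. -/

import Mathlib

open MeasureTheory Matrix

noncomputable section

open scoped ENNReal

/-!
Each `hᵢ` is `x ↦ Lμᵢ(|x|²)` with `Lμ(t) = ∫ e^{-st} dμ(s)` the Laplace transform, and a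
product of Laplace transforms is the Laplace transform of the convolution `ρ = μ₁ ∗ ⋯ ∗ μₙ`,
again a measure on `[0, ∞)`. By Tonelli,
`F(x) = ∫ dρ(s) ∫ exp(-⟨y, Ay⟩ - s|x + y|²) dy`,
and completing the square in the inner integral (translating `y` by the minimiser) shows that it
equals `e^{-c}` times its value at `x = 0`, for some `0 ≤ c ≤ ⟨x, Ax⟩`. Hence `F(x) ≤ F(0)`, and
also `e^{-⟨x, Ax⟩} F(0) ≤ F(x)`: if `F(0) = ∞` then `F(x) = ∞` too, so the inequality survives
the passage to Bochner integrals, which read both as `0`.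
-/

/-- Valued in `ℝ≥0∞`, so that no integrability is needed. -/
def laplaceTransform (ρ : Measure ℝ) (t : ℝ) : ℝ≥0∞ :=
  ∫⁻ s, ENNReal.ofReal (Real.exp (-s * t)) ∂ρ

section laplaceTransform

variable {ρ ν : Measure ℝ}

theorem measurable_laplaceTransform [SFinite ρ] : Measurable (laplaceTransform ρ) :=
  Measurable.lintegral_prod_right'
    (f := fun p : ℝ × ℝ => ENNReal.ofReal (Real.exp (-p.2 * p.1))) (by fun_prop)

theorem laplaceTransform_lt_top [IsFiniteMeasure ρ] (hρ : ∀ᵐ s ∂ρ, 0 ≤ s) {t : ℝ} (ht : 0 ≤ t) :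
    laplaceTransform ρ t < ⊤ := by
  refine (lintegral_mono_ae (g := fun _ => 1) (hρ.mono fun s hs => ?_)).trans_lt ?_
  · exact ENNReal.ofReal_le_one.2 (Real.exp_le_one_iff.2 (by nlinarith))
  · simp

theorem laplaceTransform_conv [SFinite ν] (t : ℝ) :
    laplaceTransform (ρ ∗ ν) t = laplaceTransform ρ t * laplaceTransform ν t := by
  rw [laplaceTransform, Measure.lintegral_conv (by fun_prop)]
  have hexp : ∀ r, Measurable fun s : ℝ => ENNReal.ofReal (Real.exp (-s * r)) := fun r => by
    fun_prop
  calc ∫⁻ s, ∫⁻ r, ENNReal.ofReal (Real.exp (-(s + r) * t)) ∂ν ∂ρ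
      = ∫⁻ s, ENNReal.ofReal (Real.exp (-s * t)) * laplaceTransform ν t ∂ρ := by
        refine lintegral_congr fun s => ?_
        rw [laplaceTransform, ← lintegral_const_mul _ (hexp t)]
        refine lintegral_congr fun r => ?_
        rw [← ENNReal.ofReal_mul (Real.exp_nonneg _), ← Real.exp_add]
        ring_nf
    _ = laplaceTransform ρ t * laplaceTransform ν t := lintegral_mul_const _ (hexp t)

theorem laplaceTransform_dirac_zero (t : ℝ) : laplaceTransform (Measure.dirac 0) t = 1 := by
  simp [laplaceTransform]

theorem ae_nonneg_conv [SFinite ν] (hρ : ∀ᵐ s ∂ρ, 0 ≤ s) (hν : ∀ᵐ s ∂ν, 0 ≤ s) :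
    ∀ᵐ s ∂(ρ ∗ ν), 0 ≤ s := by
  rw [Measure.conv, ae_map_iff (by fun_prop) measurableSet_Ici]
  filter_upwards [Measure.quasiMeasurePreserving_fst.ae hρ,
    Measure.quasiMeasurePreserving_snd.ae hν] with z hz₁ hz₂
  exact add_nonneg hz₁ hz₂

end laplaceTransform

theorem exists_laplaceTransform_eq_prod {κ : Type*} (s : Finset κ) (ν : κ → Measure ℝ)
    [∀ i, IsFiniteMeasure (ν i)] (hν : ∀ i, ∀ᵐ r ∂ν i, 0 ≤ r) :
    ∃ ρ : Measure ℝ, IsFiniteMeasure ρ ∧ (∀ᵐ r ∂ρ, 0 ≤ r) ∧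
      ∀ t, laplaceTransform ρ t = ∏ i ∈ s, laplaceTransform (ν i) t := by
  classical
  induction s using Finset.induction_on with
  | empty => exact ⟨Measure.dirac 0, inferInstance, by simp, laplaceTransform_dirac_zero⟩
  | insert a s ha ih =>
    obtain ⟨ρ, _, hρ, hL⟩ := ih
    exact ⟨ν a ∗ ρ, inferInstance, ae_nonneg_conv (hν a) hρ, fun t => by
      rw [laplaceTransform_conv, hL, Finset.prod_insert ha]⟩

variable {ι : Type*} [Fintype ι]

theorem Matrix.IsSymm.dotProduct_mulVec_comm {R : Type*} [CommSemiring R] {A : Matrix ι ι R}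
    (hA : A.IsSymm) (u v : ι → R) : u ⬝ᵥ A *ᵥ v = v ⬝ᵥ A *ᵥ u := by
  rw [dotProduct_mulVec, ← mulVec_transpose, hA.eq, dotProduct_comm]

theorem Matrix.PosDef.exists_complete_square {A : Matrix ι ι ℝ} (hA : A.PosDef) {S : ℝ}
    (hS : 0 ≤ S) (x : ι → ℝ) :
    ∃ m : ι → ℝ, ∃ c : ℝ, ∀ y, y ⬝ᵥ A *ᵥ y + S * ((x + y) ⬝ᵥ (x + y)) =
      (y + m) ⬝ᵥ A *ᵥ (y + m) + S * ((y + m) ⬝ᵥ (y + m)) + c := by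
  classical
  have hB : (A + S • 1).PosDef :=
    hA.add_posSemidef (by simpa [smul_one_eq_diagonal] using fun _ => hS)
  set m := (A + S • 1)⁻¹ *ᵥ (S • x)
  have hm : A *ᵥ m + S • m = S • x := by
    have : (A + S • 1) *ᵥ m = S • x := by
      rw [mulVec_mulVec, mul_nonsing_inv _ hB.det_pos.ne'.isUnit, one_mulVec]
    simpa [add_mulVec, smul_mulVec] using this
  refine ⟨m, S * (x ⬝ᵥ x) - (m ⬝ᵥ A *ᵥ m + S * (m ⬝ᵥ m)), fun y => ?_⟩
  have key := congrArg (y ⬝ᵥ ·) hm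
  simp only [dotProduct_add, dotProduct_smul, smul_eq_mul] at key
  have hsymm := (isHermitian_iff_isSymm.1 hA.isHermitian).dotProduct_mulVec_comm m y
  simp only [mulVec_add, dotProduct_add, add_dotProduct, hsymm, dotProduct_comm x y,
    dotProduct_comm m y]
  linear_combination (-2) * key

theorem Matrix.PosDef.exists_lintegral_exp_neg_quadratic_shift_eq {A : Matrix ι ι ℝ}
    (hA : A.PosDef) {S : ℝ} (hS : 0 ≤ S) (x : ι → ℝ) :
    ∃ c : ℝ, 0 ≤ c ∧ c ≤ x ⬝ᵥ A *ᵥ x ∧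
      ∫⁻ y, ENNReal.ofReal (Real.exp (-(y ⬝ᵥ A *ᵥ y + S * ((x + y) ⬝ᵥ (x + y))))) =
        ENNReal.ofReal (Real.exp (-c)) *
          ∫⁻ y, ENNReal.ofReal (Real.exp (-(y ⬝ᵥ A *ᵥ y + S * (y ⬝ᵥ y)))) := by
  obtain ⟨m, c, hmc⟩ := hA.exists_complete_square hS x
  have hq : ∀ z : ι → ℝ, 0 ≤ z ⬝ᵥ A *ᵥ z := fun z => by
    simpa using hA.posSemidef.dotProduct_mulVec_nonneg z
  have hd : ∀ z : ι → ℝ, 0 ≤ S * (z ⬝ᵥ z) := fun z =>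
    mul_nonneg hS (Finset.sum_nonneg fun i _ => mul_self_nonneg (z i))
  refine ⟨c, ?_, ?_, ?_⟩
  · have := hmc (-m)
    simp only [neg_add_cancel, zero_dotProduct, mul_zero, zero_add] at this
    linarith [hq (-m), hd (x + -m)]
  · have := hmc (-x)
    simp only [add_neg_cancel, zero_dotProduct, mul_zero, add_zero, mulVec_neg, dotProduct_neg,
      neg_dotProduct, neg_neg] at this
    linarith [hq (-x + m), hd (-x + m)]
  · set g := fun y : ι → ℝ => ENNReal.ofReal (Real.exp (-(y ⬝ᵥ A *ᵥ y + S * (y ⬝ᵥ y))))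
    have hshift : ∀ y, ENNReal.ofReal (Real.exp (-(y ⬝ᵥ A *ᵥ y + S * ((x + y) ⬝ᵥ (x + y))))) =
        ENNReal.ofReal (Real.exp (-c)) * g (y + m) := fun y => by
      rw [hmc, ← ENNReal.ofReal_mul (Real.exp_nonneg _), ← Real.exp_add]
      ring_nf
    simp_rw [hshift]
    rw [lintegral_const_mul' _ _ ENNReal.ofReal_ne_top, lintegral_add_right_eq_self g m]

theorem lintegral_gaussian_mul_laplaceTransform_eq (A : Matrix ι ι ℝ) (ρ : Measure ℝ) [SFinite ρ]
    (x : ι → ℝ) :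
    ∫⁻ y, ENNReal.ofReal (Real.exp (-(y ⬝ᵥ A *ᵥ y))) * laplaceTransform ρ ((x + y) ⬝ᵥ (x + y)) =
      ∫⁻ s, (∫⁻ y, ENNReal.ofReal (Real.exp (-(y ⬝ᵥ A *ᵥ y + s * ((x + y) ⬝ᵥ (x + y)))))) ∂ρ := by
  calc _ = ∫⁻ y, ∫⁻ s,
        ENNReal.ofReal (Real.exp (-(y ⬝ᵥ A *ᵥ y + s * ((x + y) ⬝ᵥ (x + y))))) ∂ρ := by
        refine lintegral_congr fun y => ?_
        rw [laplaceTransform, ← lintegral_const_mul' _ _ ENNReal.ofReal_ne_top]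
        refine lintegral_congr fun s => ?_
        rw [← ENNReal.ofReal_mul (Real.exp_nonneg _), ← Real.exp_add]
        ring_nf
    _ = _ := lintegral_lintegral_swap (by fun_prop)

section comparison

variable {A : Matrix ι ι ℝ} {ρ : Measure ℝ} [SFinite ρ]

theorem lintegral_gaussian_mul_laplaceTransform_le (hA : A.PosDef) (hρ : ∀ᵐ s ∂ρ, 0 ≤ s)
    (x : ι → ℝ) :
    ∫⁻ y, ENNReal.ofReal (Real.exp (-(y ⬝ᵥ A *ᵥ y))) * laplaceTransform ρ ((x + y) ⬝ᵥ (x + y)) ≤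
      ∫⁻ y, ENNReal.ofReal (Real.exp (-(y ⬝ᵥ A *ᵥ y))) * laplaceTransform ρ (y ⬝ᵥ y) := by
  have h0 := lintegral_gaussian_mul_laplaceTransform_eq A ρ 0
  simp only [zero_add] at h0
  rw [lintegral_gaussian_mul_laplaceTransform_eq, h0]
  refine lintegral_mono_ae (hρ.mono fun s hs => ?_)
  obtain ⟨c, hc, -, hshift⟩ := hA.exists_lintegral_exp_neg_quadratic_shift_eq hs x
  rw [hshift]
  exact mul_le_of_le_one_left' (ENNReal.ofReal_le_one.2 (Real.exp_le_one_iff.2 (by linarith)))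

theorem ofReal_exp_mul_lintegral_gaussian_mul_laplaceTransform_le (hA : A.PosDef)
    (hρ : ∀ᵐ s ∂ρ, 0 ≤ s) (x : ι → ℝ) :
    ENNReal.ofReal (Real.exp (-(x ⬝ᵥ A *ᵥ x))) *
        ∫⁻ y, ENNReal.ofReal (Real.exp (-(y ⬝ᵥ A *ᵥ y))) * laplaceTransform ρ (y ⬝ᵥ y) ≤
      ∫⁻ y, ENNReal.ofReal (Real.exp (-(y ⬝ᵥ A *ᵥ y))) *
        laplaceTransform ρ ((x + y) ⬝ᵥ (x + y)) := by
  have h0 := lintegral_gaussian_mul_laplaceTransform_eq A ρ 0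
  simp only [zero_add] at h0
  rw [lintegral_gaussian_mul_laplaceTransform_eq, h0,
    ← lintegral_const_mul' _ _ ENNReal.ofReal_ne_top]
  refine lintegral_mono_ae (hρ.mono fun s hs => ?_)
  obtain ⟨c, -, hc, hshift⟩ := hA.exists_lintegral_exp_neg_quadratic_shift_eq hs x
  rw [hshift]
  gcongr

end comparison

theorem ENNReal.toReal_le_toReal_of_le_of_mul_le {a b c : ℝ≥0∞} (hab : a ≤ b) (hc : c ≠ 0)
    (hcb : c * b ≤ a) : a.toReal ≤ b.toReal := by
  rcases eq_or_ne b ⊤ with rfl | hb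
  · rw [ENNReal.mul_top hc, top_le_iff] at hcb
    simp [hcb]
  · exact ENNReal.toReal_mono hb hab

theorem integral_gaussian_mul_toReal_laplaceTransform (A : Matrix ι ι ℝ) {ρ : Measure ℝ}
    [IsFiniteMeasure ρ] (hρ : ∀ᵐ s ∂ρ, 0 ≤ s) (x : ι → ℝ) :
    ∫ y, Real.exp (-(y ⬝ᵥ A *ᵥ y)) * (laplaceTransform ρ ((x + y) ⬝ᵥ (x + y))).toReal =
      (∫⁻ y, ENNReal.ofReal (Real.exp (-(y ⬝ᵥ A *ᵥ y))) *
        laplaceTransform ρ ((x + y) ⬝ᵥ (x + y))).toReal := by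
  rw [← integral_toReal]
  · simp only [ENNReal.toReal_mul, ENNReal.toReal_ofReal (Real.exp_nonneg _)]
  · have hgauss : Measurable fun y : ι → ℝ => ENNReal.ofReal (Real.exp (-(y ⬝ᵥ A *ᵥ y))) := by
      fun_prop
    exact (hgauss.mul (measurable_laplaceTransform.comp (by fun_prop))).aemeasurable
  · exact ae_of_all _ fun y => ENNReal.mul_lt_top ENNReal.ofReal_lt_top
      (laplaceTransform_lt_top hρ (Finset.sum_nonneg fun i _ => mul_self_nonneg _))

theorem gaussian_definite_product_maximal_at_origin_general
    {d : ℕ}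
    (A : Matrix (Fin d) (Fin d) ℝ) (hA : A.PosDef)
    {n : ℕ} (μ : Fin n → Measure ℝ)
    (h : Fin n → (Fin d → ℝ) → ℝ)
    (hh : ∀ (i : Fin n) (x : Fin d → ℝ), h i x = ∫ s in Set.Ici (0 : ℝ), Real.exp (-s * ∑ j, x j ^ 2) ∂(μ i))
    (hfin : ∀ (i : Fin n) (x : Fin d → ℝ),
      IntegrableOn (fun s => Real.exp (-s * ∑ j, x j ^ 2)) (Set.Ici 0) (μ i))
    (x : Fin d → ℝ) :
    ∫ y : Fin d → ℝ, Real.exp (-(y ⬝ᵥ A.mulVec y)) * ∏ i, h i (x + y) ≤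
      ∫ y : Fin d → ℝ, Real.exp (-(y ⬝ᵥ A.mulVec y)) * ∏ i, h i y := by
  set ν := fun i => (μ i).restrict (Set.Ici 0)
  have hν : ∀ i, IsFiniteMeasure (ν i) := fun i => by
    simpa [ν, isFiniteMeasure_restrict, lt_top_iff_ne_top] using hfin i 0
  obtain ⟨ρ, _, hρ, hL⟩ :=
    exists_laplaceTransform_eq_prod Finset.univ ν fun i => ae_restrict_mem measurableSet_Ici
  have hprod : ∀ z, ∏ i, h i z = (laplaceTransform ρ (z ⬝ᵥ z)).toReal := fun z => by
    rw [hL, ENNReal.toReal_prod]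
    refine Finset.prod_congr rfl fun i _ => ?_
    rw [hh, integral_eq_lintegral_of_nonneg_ae (ae_of_all _ fun s => Real.exp_nonneg _)
      (Continuous.aestronglyMeasurable (by fun_prop)), laplaceTransform]
    simp [ν, dotProduct, sq]
  simp_rw [hprod]
  have h0 := integral_gaussian_mul_toReal_laplaceTransform A hρ 0
  simp only [zero_add] at h0
  rw [integral_gaussian_mul_toReal_laplaceTransform A hρ x, h0]
  exact ENNReal.toReal_le_toReal_of_le_of_mul_le
      (lintegral_gaussian_mul_laplaceTransform_le hA hρ x) (by positivity)
      (ofReal_exp_mul_lintegral_gaussian_mul_laplaceTransform_le hA hρ x)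

/-- Lemma A.3 of Bley–Thomas: if `h₁, …, hₙ` are Gaussian definite functions, then
`F(x) = ∫ exp(-⟨y, Ay⟩) ∏ᵢ hᵢ(x + y) dy` is maximal at `x = 0`. -/
theorem gaussian_definite_product_maximal_at_origin
    {d : ℕ} (hd : 1 ≤ d)
    (A : Matrix (Fin d) (Fin d) ℝ) (hA : A.PosDef)
    {n : ℕ} (hn : 1 ≤ n) (μ : Fin n → Measure ℝ)
    (h : Fin n → (Fin d → ℝ) → ℝ)
    (hh : ∀ (i : Fin n) (x : Fin d → ℝ), h i x = ∫ s in Set.Ici (0 : ℝ), Real.exp (-s * ∑ j, x j ^ 2) ∂(μ i))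
    (hfin : ∀ (i : Fin n) (x : Fin d → ℝ),
      IntegrableOn (fun s => Real.exp (-s * ∑ j, x j ^ 2)) (Set.Ici 0) (μ i))
    (x : Fin d → ℝ) :
    ∫ y : Fin d → ℝ, Real.exp (-(y ⬝ᵥ A.mulVec y)) * ∏ i, h i (x + y) ≤
      ∫ y : Fin d → ℝ, Real.exp (-(y ⬝ᵥ A.mulVec y)) * ∏ i, h i y :=
  gaussian_definite_product_maximal_at_origin_general A hA μ h hh hfin x

end
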